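/- arXiv:0704.2805 — 2 statements merged into one kernel-verified Lean document; each statement's English description precedes it below -/
import Mathlib

section
/- There is an absolute constant C > 0 with the following property. Let a and q ≥ 1 be integers with gcd(a,q) = 1, let n, k, L be positive integers and N ≥ 1 a real number satisfying L ≤ N^n, q ≤ L·N^k and 2^{n+k+1} < N, and let 𝒫 be the set of prime numbers p with N/2 ≤ p ≤ N and p ∤ q. Suppose m is a positive integer with m ≤ n and r₁, …, r_m are positive integers with r₁ + … + r_m = n. Then ∑_{l=1}^{L} | ∑_{q₁ ∈ 𝒫} … ∑_{q_m ∈ 𝒫} e(l·q₁^{r₁}⋯q_m^{r_m}·a/q) | ≤ C · 2^{n+k} · n^n · max( L·N^{n/2 + k/2}, L·N^n/q^{1/2} ). -/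
/-!
If `2m ≤ n + k`, the trivial bound `L·|𝒫|^m ≤ L·N^{(n+k)/2}` suffices. Otherwise, since the `r_i`
are positive and sum to `n`, at least `k` of them equal `1`; fix `k` such indices `I`. Writing
`t = u·v` with `u` supported on `I` and `v` on its complement, the sum is bounded by the bilinear
form `∑_{l,u} |∑_v e(l·U(u)·V(v)·a/q)|`, where `U(u) ≤ N^k` and `V(v) ≤ N^{n-k}` are the values
of the monomial. By Cauchy–Schwarz in `(l, u)` it suffices to bound the second moment of the
inner sum over `x = l·U(u) ≤ L N^k`; each `x` arises at most `(n+k)^k` times, because the primes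
of `𝒫` exceed `2^{n+k}`, so at most `n + k` of them divide a number `≤ N^{n+k}`. The second
moment is `q`-periodic in `x`, and over a full period orthogonality turns it into `q` times the
number of pairs `V(v) ≡ V(v') (mod q)`, which is at most `|𝒫|^{m-k}(n+k)^{m-k}(N^{n-k}/q + 1)`.
-/

open Finset

/-- e(x) = e^{2πix}. -/
noncomputable def e (x : ℝ) : ℂ := Complex.exp (2 * Real.pi * Complex.I * x)

lemma norm_e (x : ℝ) : ‖e x‖ = 1 := by
  simp [e, Complex.norm_exp]

lemma e_add (x y : ℝ) : e (x + y) = e x * e y := by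
  simp only [e, Complex.ofReal_add, mul_add, Complex.exp_add]

lemma e_eq_one_iff (x : ℝ) : e x = 1 ↔ ∃ j : ℤ, x = j := by
  rw [e, Complex.exp_eq_one_iff]
  refine exists_congr fun j => ?_
  have h2πi : (2 * Real.pi * Complex.I : ℂ) ≠ 0 := by
    simp [Real.pi_ne_zero, Complex.I_ne_zero]
  rw [mul_comm (j : ℂ), mul_right_inj' h2πi]
  norm_cast

lemma e_intCast (j : ℤ) : e j = 1 :=
  (e_eq_one_iff _).2 ⟨j, rfl⟩

lemma e_add_intCast (x : ℝ) (j : ℤ) : e (x + j) = e x := by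
  rw [e_add, e_intCast, mul_one]

lemma e_natCast_mul (c : ℕ) (x : ℝ) : e (c * x) = e x ^ c := by
  rw [e, e, ← Complex.exp_nat_mul]
  push_cast
  ring_nf

lemma e_mul_conj (x y : ℝ) : e x * starRingEnd ℂ (e y) = e (x - y) := by
  simp only [e, ← Complex.exp_conj, ← Complex.exp_add, map_mul, Complex.conj_ofReal,
    Complex.conj_I, map_ofNat]
  push_cast
  ring_nf

lemma sum_range_e_mul_div (Q : ℕ) (hQ : 0 < Q) (D : ℤ) :
    ∑ c ∈ range Q, e (c * D / Q) = if (Q : ℤ) ∣ D then (Q : ℂ) else 0 := by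
  have hQ' : (Q : ℝ) ≠ 0 := by positivity
  have hpow (c : ℕ) : e (c * D / Q) = e (D / Q) ^ c := by
    rw [mul_div_assoc, e_natCast_mul]
  simp_rw [hpow]
  split_ifs with hdvd
  · obtain ⟨j, rfl⟩ := hdvd
    rw [(e_eq_one_iff _).2 ⟨j, by push_cast; field_simp⟩]
    simp
  · have hne : e (D / Q) ≠ 1 := by
      rw [Ne, e_eq_one_iff]
      rintro ⟨j, hj⟩
      exact hdvd ⟨j, by rw [div_eq_iff hQ'] at hj; exact_mod_cast hj.trans (mul_comm _ _)⟩
    rw [geom_sum_eq hne, ← hpow, show (Q : ℝ) * D / Q = D by field_simp, e_intCast,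
      sub_self, zero_div]

lemma sum_range_norm_sum_e_sq {β : Type*} (V : Finset β) (g : β → ℕ) (a : ℤ) (Q : ℕ)
    (hQ : 0 < Q) (ha : Int.gcd a Q = 1) :
    ∑ c ∈ range Q, ‖∑ v ∈ V, e (c * g v * a / Q)‖ ^ 2 =
      Q * #{p ∈ V ×ˢ V | g p.2 ≡ g p.1 [MOD Q]} := by
  have hdvd (p : β × β) :
      (Q : ℤ) ∣ ((g p.1 : ℤ) - g p.2) * a ↔ g p.2 ≡ g p.1 [MOD Q] := by
    rw [Nat.modEq_iff_dvd]
    refine ⟨fun h => Int.dvd_of_dvd_mul_left_of_gcd_one h ?_, fun h => h.mul_right a⟩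
    rwa [Int.gcd_comm]
  have hexpand (c : ℕ) : ((‖∑ v ∈ V, e (c * g v * a / Q)‖ ^ 2 : ℝ) : ℂ) =
      ∑ p ∈ V ×ˢ V, e (c * (((g p.1 : ℤ) - g p.2) * a : ℤ) / Q) := by
    rw [Complex.ofReal_pow, ← Complex.mul_conj', map_sum, sum_mul_sum, sum_product]
    refine sum_congr rfl fun v _ => sum_congr rfl fun w _ => ?_
    rw [e_mul_conj]
    push_cast
    ring_nf
  apply Complex.ofReal_injective
  rw [Complex.ofReal_sum, sum_congr rfl fun c _ => hexpand c, sum_comm]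
  simp_rw [sum_range_e_mul_div Q hQ, hdvd]
  rw [sum_ite, sum_const_zero, add_zero, sum_const, nsmul_eq_mul, mul_comm]
  norm_cast

lemma card_filter_mod_eq_le (X Q c : ℕ) : #{x ∈ Icc 1 X | x % Q = c} ≤ X / Q + 1 := by
  calc #{x ∈ Icc 1 X | x % Q = c} ≤ #(range (X / Q + 1)) := by
        refine card_le_card_of_injOn (· / Q) (fun x hx => ?_) fun x hx y hy hxy => ?_
        · rw [mem_coe, mem_filter, mem_Icc] at hx
          exact mem_range.2 (Nat.lt_succ_of_le (Nat.div_le_div_right hx.1.2))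
        · rw [mem_coe, mem_filter] at hx hy
          rw [← Nat.div_add_mod x Q, ← Nat.div_add_mod y Q, hx.2, hy.2]
          exact congrArg (Q * · + c) hxy
    _ = X / Q + 1 := card_range _

lemma sum_comp_le_mul_sum {α β : Type*} [DecidableEq β] {s : Finset α} {t : Finset β}
    {f : α → β} {h : β → ℝ} {K : ℕ} (h0 : ∀ b ∈ t, 0 ≤ h b) (hmap : ∀ a ∈ s, f a ∈ t)
    (hfib : ∀ b ∈ t, #{a ∈ s | f a = b} ≤ K) :
    ∑ a ∈ s, h (f a) ≤ K * ∑ b ∈ t, h b := by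
  rw [← sum_fiberwise_of_maps_to hmap, mul_sum]
  refine sum_le_sum fun b hb => ?_
  rw [sum_congr rfl fun a ha => by rw [(mem_filter.1 ha).2], sum_const, nsmul_eq_mul]
  exact mul_le_mul_of_nonneg_right (by exact_mod_cast hfib b hb) (h0 b hb)

lemma sum_Icc_le_of_periodic {f : ℕ → ℝ} {Q : ℕ} (hf : Function.Periodic f Q)
    (hf0 : ∀ x, 0 ≤ f x) (hQ : 0 < Q) (X : ℕ) :
    ∑ x ∈ Icc 1 X, f x ≤ (X / Q + 1 : ℕ) * ∑ c ∈ range Q, f c := by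
  rw [sum_congr rfl fun x _ => (hf.map_mod_nat x).symm]
  exact sum_comp_le_mul_sum (fun c _ => hf0 c) (fun x _ => mem_range.2 (Nat.mod_lt x hQ))
    fun c _ => card_filter_mod_eq_le X Q c

lemma card_filter_modEq_le {β : Type*} (V : Finset β) (g : β → ℕ) (Q Y D c : ℕ)
    (hg : ∀ v ∈ V, g v ∈ Icc 1 Y) (hfib : ∀ y ∈ Icc 1 Y, #{v ∈ V | g v = y} ≤ D) :
    #{v ∈ V | g v ≡ c [MOD Q]} ≤ D * (Y / Q + 1) := by
  classical
  have himg : image g {v ∈ V | g v ≡ c [MOD Q]} ⊆ {y ∈ Icc 1 Y | y % Q = c % Q} := by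
    intro y hy
    obtain ⟨v, hv, rfl⟩ := mem_image.1 hy
    exact mem_filter.2 ⟨hg v (mem_filter.1 hv).1, (mem_filter.1 hv).2⟩
  calc #{v ∈ V | g v ≡ c [MOD Q]}
      ≤ D * #(image g {v ∈ V | g v ≡ c [MOD Q]}) :=
        card_le_mul_card_image _ _ fun y hy =>
          (card_le_card fun v => by simp only [mem_filter]; tauto).trans
            (hfib y (mem_filter.1 (himg hy)).1)
    _ ≤ D * (Y / Q + 1) :=
        Nat.mul_le_mul_left _ ((card_le_card himg).trans (card_filter_mod_eq_le Y Q (c % Q)))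

lemma card_filter_modEq_pairs_le {β : Type*} (V : Finset β) (g : β → ℕ) (Q Y D : ℕ)
    (hg : ∀ v ∈ V, g v ∈ Icc 1 Y) (hfib : ∀ y ∈ Icc 1 Y, #{v ∈ V | g v = y} ≤ D) :
    #{p ∈ V ×ˢ V | g p.2 ≡ g p.1 [MOD Q]} ≤ #V * (D * (Y / Q + 1)) := by
  rw [card_filter, sum_product, ← smul_eq_mul]
  refine sum_le_card_nsmul _ _ _ fun v _ => ?_
  rw [← card_filter]
  exact card_filter_modEq_le V g Q Y D (g v) hg hfib

theorem sq_sum_norm_sum_e_mul_le {γ β : Type*} (T : Finset γ) (h : γ → ℕ) (V : Finset β)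
    (g : β → ℕ) (a : ℤ) (Q X Y D₁ D₂ : ℕ) (hQ : 0 < Q) (ha : Int.gcd a Q = 1)
    (hh : ∀ t ∈ T, h t ∈ Icc 1 X) (hhfib : ∀ x ∈ Icc 1 X, #{t ∈ T | h t = x} ≤ D₁)
    (hg : ∀ v ∈ V, g v ∈ Icc 1 Y) (hgfib : ∀ y ∈ Icc 1 Y, #{v ∈ V | g v = y} ≤ D₂) :
    (∑ t ∈ T, ‖∑ v ∈ V, e (h t * g v * a / Q)‖) ^ 2 ≤
      (#T * D₁ * (X / Q + 1) * Q * (#V * (D₂ * (Y / Q + 1))) : ℕ) := by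
  set G : ℕ → ℝ := fun x => ‖∑ v ∈ V, e (x * g v * a / Q)‖ ^ 2 with hGdef
  have hG : Function.Periodic G Q := fun x => by
    simp only [hGdef]
    congr 2
    refine sum_congr rfl fun v _ => ?_
    have hQ' : (Q : ℝ) ≠ 0 := by positivity
    rw [show ((x + Q : ℕ) : ℝ) * g v * a / Q = x * g v * a / Q + ((g v * a : ℤ) : ℝ) by
      push_cast; field_simp]
    exact e_add_intCast _ _
  calc _ ≤ #T * ∑ t ∈ T, G (h t) := sq_sum_le_card_mul_sum_sq
    _ ≤ #T * (D₁ * ∑ x ∈ Icc 1 X, G x) := by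
        gcongr
        exact sum_comp_le_mul_sum (fun x _ => by positivity) hh hhfib
    _ ≤ #T * (D₁ * ((X / Q + 1 : ℕ) * ∑ c ∈ range Q, G c)) := by
        gcongr
        exact sum_Icc_le_of_periodic hG (fun x => by positivity) hQ X
    _ = #T * (D₁ * ((X / Q + 1 : ℕ) * (Q * #{p ∈ V ×ˢ V | g p.2 ≡ g p.1 [MOD Q]}))) := by
        rw [sum_range_norm_sum_e_sq V g a Q hQ ha]
    _ ≤ #T * (D₁ * ((X / Q + 1 : ℕ) * (Q * (#V * (D₂ * (Y / Q + 1)) : ℕ)))) := by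
        gcongr
        exact_mod_cast card_filter_modEq_pairs_le V g Q Y D₂ hg hgfib
    _ = _ := by push_cast; ring

lemma norm_sum_e_le_card {α : Type*} (s : Finset α) (f : α → ℝ) : ‖∑ t ∈ s, e (f t)‖ ≤ #s :=
  (norm_sum_le _ _).trans_eq (by simp [norm_e])

lemma natCast_div_add_one_mul_le (X Y q : ℕ) (hq : 0 < q) :
    (((X / q + 1) * q * (Y / q + 1) : ℕ) : ℝ) ≤ (X + q) * (Y + q) / q := by
  have hq' : (0 : ℝ) < q := by exact_mod_cast hq
  have hdiv (Z : ℕ) : ((Z / q + 1 : ℕ) : ℝ) ≤ (Z + q) / q := by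
    rw [add_div, div_self hq'.ne']
    push_cast
    linarith [Nat.cast_div_le (α := ℝ) (m := Z) (n := q)]
  calc (((X / q + 1) * q * (Y / q + 1) : ℕ) : ℝ)
      = ((X / q + 1 : ℕ) : ℝ) * q * ((Y / q + 1 : ℕ) : ℝ) := by push_cast; ring
    _ ≤ (X + q) / q * q * ((Y + q) / q) := by gcongr <;> exact hdiv _
    _ = (X + q) * (Y + q) / q := by field_simp

lemma card_filter_dvd_le {P : Finset ℕ} {N : ℝ} {s x : ℕ} (hN : (2 : ℝ) ^ (s + 1) < N)
    (hP : ∀ p ∈ P, p.Prime ∧ N / 2 ≤ p) (hx : 0 < x) (hxN : (x : ℝ) ≤ N ^ s) :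
    #{p ∈ P | p ∣ x} ≤ s := by
  have h2 : (0 : ℝ) < 2 ^ (s + 1) := by positivity
  have h2' : (2 : ℝ) ≤ 2 ^ (s + 1) := le_self_pow₀ one_le_two (Nat.succ_ne_zero s)
  have hN1 : 1 ≤ N / 2 := by
    rw [le_div_iff₀ two_pos]
    linarith
  have hNs : N ^ s < (N / 2) ^ (s + 1) := by
    rw [div_pow, lt_div_iff₀ h2, pow_succ N]
    exact mul_lt_mul_of_pos_left hN (pow_pos (by linarith) s)
  by_contra! hlt
  have hprod : ∏ p ∈ P with p ∣ x, p ∣ x :=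
    prod_primes_dvd x (fun p hp => (hP p (mem_filter.1 hp).1).1.prime)
      fun p hp => (mem_filter.1 hp).2
  have : (N / 2) ^ (s + 1) ≤ x := calc
    (N / 2) ^ (s + 1) ≤ (N / 2) ^ #{p ∈ P | p ∣ x} := pow_le_pow_right₀ hN1 hlt
    _ = ∏ p ∈ P with p ∣ x, N / 2 := (prod_const _).symm
    _ ≤ ∏ p ∈ P with p ∣ x, (p : ℝ) :=
        prod_le_prod (fun _ _ => by linarith) fun p hp => (hP p (mem_filter.1 hp).1).2
    _ = ((∏ p ∈ P with p ∣ x, p : ℕ) : ℝ) := (Nat.cast_prod _ _).symm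
    _ ≤ x := Nat.cast_le.2 (Nat.le_of_dvd hx hprod)
  linarith

lemma card_filter_mul_eq_le {γ : Type*} (S : Finset ℕ) (T : Finset γ) (f : γ → ℕ)
    (hf : ∀ t ∈ T, 0 < f t) (x : ℕ) :
    #{p ∈ S ×ˢ T | p.1 * f p.2 = x} ≤ #{t ∈ T | f t ∣ x} := by
  refine card_le_card_of_injOn Prod.snd (fun p hp => ?_) fun p hp p' hp' hpp => ?_
  · rw [mem_coe, mem_filter, mem_product] at hp
    rw [mem_coe, mem_filter]
    exact ⟨hp.1.2, ⟨p.1, by rw [← hp.2, mul_comm]⟩⟩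
  · rw [mem_coe, mem_filter, mem_product] at hp hp'
    refine Prod.ext ?_ hpp
    have hx : p.1 * f p.2 = p'.1 * f p.2 := by rw [hp.2, hpp, hp'.2]
    exact Nat.eq_of_mul_eq_mul_right (hf _ hp.1.2) hx

section piFinsetOn

variable {ι : Type*} [Fintype ι]

def prodPow (r t : ι → ℕ) : ℕ := ∏ i, t i ^ r i

lemma prodPow_mul (r u v : ι → ℕ) : prodPow r (u * v) = prodPow r u * prodPow r v := by
  simp only [prodPow, Pi.mul_apply, mul_pow, prod_mul_distrib]

variable [DecidableEq ι]

/-- Tuples supported on `I` are padded with `1` outside `I`, so that `u * v` glues a tuple on `I`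
to one on `Iᶜ` and `prodPow` turns this gluing into a product. -/
def piFinsetOn (I : Finset ι) (s : Finset ℕ) : Finset (ι → ℕ) :=
  Fintype.piFinset fun i => if i ∈ I then s else {1}

lemma mem_piFinsetOn {I : Finset ι} {s : Finset ℕ} {t : ι → ℕ} :
    t ∈ piFinsetOn I s ↔ (∀ i ∈ I, t i ∈ s) ∧ ∀ i ∉ I, t i = 1 := by
  simp only [piFinsetOn, Fintype.mem_piFinset]
  refine ⟨fun h => ⟨fun i hi => ?_, fun i hi => ?_⟩, fun h i => ?_⟩
  · simpa [hi] using h i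
  · simpa [hi] using h i
  · by_cases hi : i ∈ I <;> simp [hi, h.1, h.2]

lemma card_piFinsetOn (I : Finset ι) (s : Finset ℕ) : #(piFinsetOn I s) = #s ^ #I := by
  simp only [piFinsetOn, Fintype.card_piFinset, apply_ite card, card_singleton]
  rw [prod_ite_mem univ I fun _ => #s, univ_inter, prod_const]

lemma sum_piFinset_eq_sum_piFinsetOn_mul {M : Type*} [AddCommMonoid M] (I : Finset ι)
    (s : Finset ℕ) (F : (ι → ℕ) → M) :
    ∑ t ∈ Fintype.piFinset (fun _ => s), F t =
      ∑ u ∈ piFinsetOn I s, ∑ v ∈ piFinsetOn Iᶜ s, F (u * v) := by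
  rw [← sum_product' _ _ fun u v => F (u * v)]
  refine sum_nbij' (fun t => (fun i => if i ∈ I then t i else 1, fun i => if i ∈ I then 1 else t i))
    (fun p => p.1 * p.2) (fun t ht => ?_) (fun p hp => ?_) (fun t _ => ?_) (fun p hp => ?_)
    fun t _ => ?_
  · rw [Fintype.mem_piFinset] at ht
    simp_all [mem_product, mem_piFinsetOn]
  · rw [mem_product, mem_piFinsetOn, mem_piFinsetOn] at hp
    simp only [mem_compl, not_not] at hp
    obtain ⟨⟨hu, hu1⟩, hv, hv1⟩ := hp
    rw [Fintype.mem_piFinset]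
    intro i
    by_cases hi : i ∈ I
    · rw [Pi.mul_apply, hv1 i hi, mul_one]
      exact hu i hi
    · rw [Pi.mul_apply, hu1 i hi, one_mul]
      exact hv i hi
  · funext i
    by_cases hi : i ∈ I <;> simp [hi]
  · rw [mem_product, mem_piFinsetOn, mem_piFinsetOn] at hp
    simp only [mem_compl, not_not] at hp
    obtain ⟨⟨-, hu1⟩, -, hv1⟩ := hp
    refine Prod.ext (funext fun i => ?_) (funext fun i => ?_) <;> by_cases hi : i ∈ I <;>
      simp [hi, hu1 i, hv1 i]
  · congr 1
    funext i
    by_cases hi : i ∈ I <;> simp [hi]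

lemma prodPow_mem_Icc {I : Finset ι} {s : Finset ℕ} {B : ℕ} (hs : ∀ p ∈ s, p ∈ Icc 1 B)
    (r : ι → ℕ) {t : ι → ℕ} (ht : t ∈ piFinsetOn I s) :
    prodPow r t ∈ Icc 1 (B ^ ∑ i ∈ I, r i) := by
  rw [mem_piFinsetOn] at ht
  have hbound (i : ι) : t i ^ r i ∈ Icc 1 (if i ∈ I then B ^ r i else 1) := by
    by_cases hi : i ∈ I
    · obtain ⟨h1, hB⟩ := mem_Icc.1 (hs _ (ht.1 i hi))
      simpa [hi] using ⟨Nat.one_le_pow _ _ h1, Nat.pow_le_pow_left hB _⟩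
    · simp [hi, ht.2 i hi]
  rw [mem_Icc, ← prod_pow_eq_pow_sum, ← univ_inter I, ← prod_ite_mem]
  exact ⟨one_le_prod' fun i _ => (mem_Icc.1 (hbound i)).1,
    prod_le_prod' fun i _ => (mem_Icc.1 (hbound i)).2⟩

lemma card_filter_prodPow_dvd_le {I : Finset ι} {r : ι → ℕ} (hr : ∀ i ∈ I, 0 < r i)
    (s : Finset ℕ) (x : ℕ) :
    #{t ∈ piFinsetOn I s | prodPow r t ∣ x} ≤ #{p ∈ s | p ∣ x} ^ #I := by
  rw [← card_piFinsetOn]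
  refine card_le_card fun t ht => ?_
  rw [mem_filter, mem_piFinsetOn] at ht
  rw [mem_piFinsetOn]
  refine ⟨fun i hi => mem_filter.2 ⟨ht.1.1 i hi, ?_⟩, ht.1.2⟩
  exact (dvd_pow_self _ (hr i hi).ne').trans ((dvd_prod_of_mem _ (mem_univ i)).trans ht.2)

end piFinsetOn

lemma natCast_card_le {P : Finset ℕ} {N : ℝ} (hN : 0 ≤ N) (hP : ∀ p ∈ P, 0 < p ∧ (p : ℝ) ≤ N) :
    (#P : ℝ) ≤ N := by
  have hcard := card_le_card fun p hp => mem_Icc.2 ⟨(hP p hp).1, Nat.le_floor (hP p hp).2⟩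
  rw [Nat.card_Icc, Nat.add_sub_cancel] at hcard
  exact (Nat.cast_le.2 hcard).trans (Nat.floor_le hN)

lemma sum_norm_sum_piFinset_e_le {ι : Type*} [Fintype ι] [DecidableEq ι] (I : Finset ι)
    (P : Finset ℕ) (r : ι → ℕ) (a : ℤ) (q L : ℕ) :
    ∑ l ∈ Icc 1 L, ‖∑ t ∈ Fintype.piFinset (fun _ : ι => P),
        e (l * (∏ i, (t i : ℝ) ^ r i) * a / q)‖ ≤
      ∑ p ∈ Icc 1 L ×ˢ piFinsetOn I P,
        ‖∑ v ∈ piFinsetOn Iᶜ P, e ((p.1 * prodPow r p.2 : ℕ) * prodPow r v * a / q)‖ := by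
  rw [sum_product]
  refine sum_le_sum fun l _ => ?_
  rw [sum_piFinset_eq_sum_piFinsetOn_mul I]
  refine (norm_sum_le _ _).trans_eq (sum_congr rfl fun u _ => ?_)
  congr 1
  refine sum_congr rfl fun v _ => ?_
  have h : ∏ i, ((u * v) i : ℝ) ^ r i = prodPow r (u * v) := by simp [prodPow]
  rw [h, prodPow_mul]
  push_cast
  ring_nf

lemma bilinear_bound_le {L q n k m A X Y : ℕ} {N : ℝ} (hq : 0 < q) (hN : 1 ≤ N) (hA : (A : ℝ) ≤ N)
    (hX : (X : ℝ) ≤ L * N ^ k) (hY : (Y : ℝ) ≤ N ^ (n - k)) (hqLN : (q : ℝ) ≤ L * N ^ k)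
    (hkm : k ≤ m) (hmn : m ≤ n) :
    ((L * A ^ k * (n + k) ^ k * (X / q + 1) * q * (A ^ (m - k) * ((n + k) ^ (m - k) * (Y / q + 1)))
      : ℕ) : ℝ) ≤ 2 ^ (n + 1) * n ^ n * ((L * N ^ n) ^ 2 / q + L ^ 2 * N ^ (n + k)) := by
  have hq' : (0 : ℝ) < q := by exact_mod_cast hq
  have hAm : (A : ℝ) ^ k * A ^ (m - k) ≤ N ^ n := by
    rw [← pow_add, Nat.add_sub_cancel' hkm]
    exact (pow_le_pow_left₀ A.cast_nonneg hA m).trans (pow_le_pow_right₀ hN hmn)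
  have hnkm : ((n + k : ℕ) : ℝ) ^ k * ((n + k : ℕ) : ℝ) ^ (m - k) ≤ 2 ^ n * n ^ n := by
    rw [← pow_add, Nat.add_sub_cancel' hkm, ← mul_pow]
    rcases Nat.eq_zero_or_pos n with rfl | hn
    · obtain rfl : m = 0 := by omega
      simp
    calc ((n + k : ℕ) : ℝ) ^ m ≤ (2 * n) ^ m := by
          gcongr
          push_cast
          linarith [(Nat.cast_le (α := ℝ)).2 (hkm.trans hmn)]
      _ ≤ (2 * n) ^ n := pow_le_pow_right₀ (by norm_cast; omega) hmn
  have hXY : (((X / q + 1) * q * (Y / q + 1) : ℕ) : ℝ) ≤ 2 * (L * N ^ k) * (N ^ (n - k) + q) / q :=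
    (natCast_div_add_one_mul_le X Y q hq).trans (by gcongr; linarith)
  have hNn : N ^ k * N ^ (n - k) = N ^ n := by rw [← pow_add, Nat.add_sub_cancel' (hkm.trans hmn)]
  calc ((L * A ^ k * (n + k) ^ k * (X / q + 1) * q * (A ^ (m - k) * ((n + k) ^ (m - k) *
        (Y / q + 1))) : ℕ) : ℝ)
      = L * ((A : ℝ) ^ k * A ^ (m - k)) * (((n + k : ℕ) : ℝ) ^ k * ((n + k : ℕ) : ℝ) ^ (m - k)) *
          (((X / q + 1) * q * (Y / q + 1) : ℕ) : ℝ) := by push_cast; ring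
    _ ≤ L * N ^ n * (2 ^ n * n ^ n) * (2 * (L * N ^ k) * (N ^ (n - k) + q) / q) := by
        gcongr
    _ = 2 ^ (n + 1) * n ^ n * ((L * N ^ n) ^ 2 / q + L ^ 2 * N ^ (n + k)) := by
        rw [pow_add N n k, ← hNn]
        field_simp
        ring

lemma exists_card_eq_forall_eq_one {ι : Type*} [Fintype ι] {r : ι → ℕ} (hr : ∀ i, 0 < r i)
    {k : ℕ} (hk : k + ∑ i, r i ≤ 2 * Fintype.card ι) :
    ∃ I : Finset ι, #I = k ∧ ∀ i ∈ I, r i = 1 := by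
  have h (i : ι) : 2 ≤ r i + if r i = 1 then 1 else 0 := by
    have := hr i
    split_ifs <;> omega
  have hcard : 2 * Fintype.card ι ≤ ∑ i, r i + #{i | r i = 1} :=
    calc 2 * Fintype.card ι = ∑ _i : ι, 2 := by simp [mul_comm]
      _ ≤ ∑ i, (r i + if r i = 1 then 1 else 0) := sum_le_sum fun i _ => h i
      _ = _ := by rw [sum_add_distrib, sum_boole, Nat.cast_id]
  obtain ⟨I, hI, hIk⟩ := exists_subset_card_eq (s := {i | r i = 1}) (n := k) (by omega)
  exact ⟨I, hIk, fun i hi => (mem_filter.1 (hI hi)).2⟩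

theorem sq_sum_norm_sum_e_prodPow_le_natCast {ι : Type*} [Fintype ι] [DecidableEq ι]
    (I : Finset ι) {r : ι → ℕ} (hr : ∀ i, 0 < r i) {P : Finset ℕ} {N : ℝ} {s B : ℕ}
    (hN : (2 : ℝ) ^ (s + 1) < N) (hP : ∀ p ∈ P, p.Prime ∧ N / 2 ≤ p) (hPB : P ⊆ Icc 1 B)
    (a : ℤ) {q : ℕ} (hq : 0 < q) (ha : Int.gcd a q = 1) (L : ℕ)
    (hLB : ((L * B ^ ∑ i ∈ I, r i : ℕ) : ℝ) ≤ N ^ s) (hB : ((B ^ ∑ i ∈ Iᶜ, r i : ℕ) : ℝ) ≤ N ^ s) :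
    (∑ l ∈ Icc 1 L, ‖∑ t ∈ Fintype.piFinset (fun _ : ι => P),
        e (l * (∏ i, (t i : ℝ) ^ r i) * a / q)‖) ^ 2 ≤
      (L * #P ^ #I * s ^ #I * (L * B ^ (∑ i ∈ I, r i) / q + 1) * q *
        (#P ^ #Iᶜ * (s ^ #Iᶜ * (B ^ (∑ i ∈ Iᶜ, r i) / q + 1))) : ℕ) := by
  have hD {x : ℕ} (hx : 0 < x) (hxN : (x : ℝ) ≤ N ^ s) (J : Finset ι) :
      #{t ∈ piFinsetOn J P | prodPow r t ∣ x} ≤ s ^ #J :=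
    (card_filter_prodPow_dvd_le (fun i _ => hr i) P x).trans
      (Nat.pow_le_pow_left (card_filter_dvd_le hN hP hx hxN) _)
  have key := sq_sum_norm_sum_e_mul_le (Icc 1 L ×ˢ piFinsetOn I P) (fun p => p.1 * prodPow r p.2)
    (piFinsetOn Iᶜ P) (prodPow r) a q (L * B ^ ∑ i ∈ I, r i) (B ^ ∑ i ∈ Iᶜ, r i) (s ^ #I)
    (s ^ #Iᶜ) hq ha ?_ ?_ (fun v hv => prodPow_mem_Icc hPB r hv) ?_
  · rw [card_product, Nat.card_Icc, Nat.add_sub_cancel, card_piFinsetOn, card_piFinsetOn] at key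
    exact (pow_le_pow_left₀ (by positivity) (sum_norm_sum_piFinset_e_le I P r a q L) 2).trans key
  · intro p hp
    rw [mem_product] at hp
    obtain ⟨hl1, hlL⟩ := mem_Icc.1 hp.1
    obtain ⟨hu1, huB⟩ := mem_Icc.1 (prodPow_mem_Icc hPB r hp.2)
    exact mem_Icc.2 ⟨one_le_mul hl1 hu1, Nat.mul_le_mul hlL huB⟩
  · intro x hx
    obtain ⟨hx1, hxLB⟩ := mem_Icc.1 hx
    exact (card_filter_mul_eq_le _ _ _
      (fun u hu => (mem_Icc.1 (prodPow_mem_Icc hPB r hu)).1) x).trans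
        (hD hx1 ((Nat.cast_le.2 hxLB).trans hLB) I)
  · intro y hy
    obtain ⟨hy1, hyB⟩ := mem_Icc.1 hy
    refine (card_le_card fun v hv => ?_).trans (hD hy1 ((Nat.cast_le.2 hyB).trans hB) Iᶜ)
    rw [mem_filter] at hv ⊢
    exact ⟨hv.1, hv.2 ▸ dvd_rfl⟩

theorem sq_sum_norm_sum_e_prodPow_le (a : ℤ) (q n k L m : ℕ) (N : ℝ) (P : Finset ℕ)
    (r : Fin m → ℕ) (hq : 0 < q) (ha : Int.gcd a q = 1) (hLN : (L : ℝ) ≤ N ^ n)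
    (hqLN : (q : ℝ) ≤ L * N ^ k) (hN : (2 : ℝ) ^ (n + k + 1) < N)
    (hP : ∀ p ∈ P, p.Prime ∧ N / 2 ≤ p ∧ p ≤ N) (hmn : m ≤ n) (hr : ∀ i, 0 < r i)
    (hrn : ∑ i, r i = n) (hkm : n + k < 2 * m) :
    (∑ l ∈ Icc 1 L, ‖∑ t ∈ Fintype.piFinset (fun _ : Fin m => P),
        e (l * (∏ i, (t i : ℝ) ^ r i) * a / q)‖) ^ 2 ≤
      2 ^ (n + 1) * n ^ n * ((L * N ^ n) ^ 2 / q + L ^ 2 * N ^ (n + k)) := by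
  obtain ⟨I, hIk, hI1⟩ := exists_card_eq_forall_eq_one hr (k := k) (by simp; omega)
  have hrI : ∑ i ∈ I, r i = k := by rw [sum_congr rfl hI1, sum_const, smul_eq_mul, mul_one, hIk]
  have hrIc : ∑ i ∈ Iᶜ, r i = n - k := by have := sum_add_sum_compl I r; omega
  have hIc : #Iᶜ = m - k := by rw [card_compl, Fintype.card_fin, hIk]
  have hN1 : 1 ≤ N := le_trans (one_le_pow₀ one_le_two) hN.le
  have hPB : P ⊆ Icc 1 ⌊N⌋₊ := fun p hp =>
    mem_Icc.2 ⟨(hP p hp).1.one_lt.le, Nat.le_floor (hP p hp).2.2⟩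
  have hBN : (⌊N⌋₊ : ℝ) ≤ N := Nat.floor_le (by linarith)
  have hBpow (j : ℕ) : ((⌊N⌋₊ ^ j : ℕ) : ℝ) ≤ N ^ j := by push_cast; gcongr
  have key := sq_sum_norm_sum_e_prodPow_le_natCast I hr hN
    (fun p hp => ⟨(hP p hp).1, (hP p hp).2.1⟩) hPB a hq ha L
    (by rw [hrI, pow_add]; push_cast; gcongr)
    (by rw [hrIc]; exact (hBpow _).trans (pow_le_pow_right₀ hN1 (by omega)))
  rw [hrI, hrIc, hIk, hIc] at key
  refine key.trans (bilinear_bound_le hq hN1 ?_ (by push_cast; gcongr)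
    (hBpow _) hqLN (by omega) hmn)
  exact natCast_card_le (by linarith) fun p hp => ⟨(hP p hp).1.pos, (hP p hp).2.2⟩

lemma sum_norm_sum_piFinset_e_le_rpow {m n k L : ℕ} {N : ℝ} {P : Finset ℕ} (hN : 1 ≤ N)
    (hP : ∀ p ∈ P, 0 < p ∧ (p : ℝ) ≤ N) (hmnk : 2 * m ≤ n + k) (f : ℕ → (Fin m → ℕ) → ℝ) :
    ∑ l ∈ Icc 1 L, ‖∑ t ∈ Fintype.piFinset (fun _ : Fin m => P), e (f l t)‖ ≤
      L * N ^ ((n : ℝ) / 2 + (k : ℝ) / 2) := by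
  calc ∑ l ∈ Icc 1 L, ‖∑ t ∈ Fintype.piFinset (fun _ : Fin m => P), e (f l t)‖
      ≤ ∑ _l ∈ Icc 1 L, (#P : ℝ) ^ m :=
        sum_le_sum fun l _ => (norm_sum_e_le_card _ _).trans (by simp [Fintype.card_piFinset])
    _ = L * (#P : ℝ) ^ m := by simp
    _ ≤ L * N ^ (m : ℝ) := by
        rw [Real.rpow_natCast]
        gcongr
        exact natCast_card_le (by linarith) hP
    _ ≤ L * N ^ ((n : ℝ) / 2 + (k : ℝ) / 2) := by
        have : (2 * m : ℝ) ≤ n + k := by exact_mod_cast hmnk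
        gcongr
        · linarith

lemma two_pow_mul_add_le_sq {n k q L : ℕ} {N : ℝ} (hn : 0 < n) (hN : 1 ≤ N) (hq : 0 < q) :
    2 ^ (n + 1) * n ^ n * ((L * N ^ n) ^ 2 / q + L ^ 2 * N ^ (n + k)) ≤
      (4 * 2 ^ (n + k) * (n : ℝ) ^ n *
        max (L * N ^ ((n : ℝ) / 2 + (k : ℝ) / 2)) (L * N ^ n / √q)) ^ 2 := by
  set M := max (L * N ^ ((n : ℝ) / 2 + (k : ℝ) / 2)) (L * N ^ n / √q)
  have hq' : (0 : ℝ) < q := by exact_mod_cast hq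
  have h1 : (L * N ^ n) ^ 2 / q ≤ M ^ 2 := by
    rw [← Real.sq_sqrt hq'.le, ← div_pow]
    exact pow_le_pow_left₀ (by positivity) (le_max_right _ _) 2
  have h2 : (L : ℝ) ^ 2 * N ^ (n + k) ≤ M ^ 2 := by
    have : (L : ℝ) ^ 2 * N ^ (n + k) = (L * N ^ ((n : ℝ) / 2 + (k : ℝ) / 2)) ^ 2 := by
      rw [mul_pow, ← Real.rpow_mul_natCast (by linarith), ← Real.rpow_natCast N (n + k)]
      congr 2
      push_cast
      ring
    rw [this]
    exact pow_le_pow_left₀ (by positivity) (le_max_left _ _) 2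
  have h3 : (2 : ℝ) ^ (n + 2) ≤ 16 * (2 ^ (n + k)) ^ 2 := by
    rw [← pow_mul, show (16 : ℝ) = 2 ^ 4 by norm_num, ← pow_add]
    exact pow_le_pow_right₀ one_le_two (by omega)
  have h4 : (n : ℝ) ^ n ≤ ((n : ℝ) ^ n) ^ 2 :=
    le_self_pow₀ (one_le_pow₀ (by exact_mod_cast hn)) two_ne_zero
  calc 2 ^ (n + 1) * n ^ n * ((L * N ^ n) ^ 2 / q + L ^ 2 * N ^ (n + k))
      ≤ 2 ^ (n + 1) * n ^ n * (M ^ 2 + M ^ 2) := by gcongr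
    _ = 2 ^ (n + 2) * n ^ n * M ^ 2 := by ring
    _ ≤ 16 * (2 ^ (n + k)) ^ 2 * ((n : ℝ) ^ n) ^ 2 * M ^ 2 := by gcongr
    _ = _ := by ring

theorem stmt_6 :
    ∃ C : ℝ, 0 < C ∧
      ∀ (a q : ℤ) (n k L : ℕ) (N : ℝ) (P : Finset ℕ) (m : ℕ) (r : Fin m → ℕ),
        1 ≤ q → Int.gcd a q = 1 → 0 < n → 0 < k → 0 < L →
        1 ≤ N → (L : ℝ) ≤ N ^ (n : ℕ) → (q : ℝ) ≤ (L : ℝ) * N ^ (k : ℕ) →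
        (2 : ℝ) ^ (n + k + 1) < N →
        (∀ p : ℕ, p ∈ P ↔ p.Prime ∧ N / 2 ≤ (p : ℝ) ∧ (p : ℝ) ≤ N ∧ ¬((p : ℤ) ∣ q)) →
        0 < m → m ≤ n → (∀ i, 0 < r i) → (∑ i, r i) = n →
        ∑ l ∈ Finset.Icc 1 L,
            ‖∑ t ∈ Fintype.piFinset (fun _ : Fin m => P),
                e ((l : ℝ) * (∏ i, (t i : ℝ) ^ (r i)) * (a : ℝ) / (q : ℝ))‖ ≤
          C * 2 ^ (n + k) * (n : ℝ) ^ (n : ℕ) *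
            max ((L : ℝ) * N ^ ((n : ℝ) / 2 + (k : ℝ) / 2))
              ((L : ℝ) * N ^ (n : ℕ) / Real.sqrt (q : ℝ)) := by
  refine ⟨4, by norm_num, fun a q n k L N P m r hq ha hn _ _ hN1 hLN hqLN hN hP _ hmn hr hrn => ?_⟩
  lift q to ℕ using (by omega)
  simp only [Int.cast_natCast] at hqLN ⊢
  have hP' (p : ℕ) (hp : p ∈ P) : p.Prime ∧ N / 2 ≤ p ∧ p ≤ N :=
    ((hP p).1 hp).imp_right fun h => ⟨h.1, h.2.1⟩
  have hM : 0 ≤ max ((L : ℝ) * N ^ ((n : ℝ) / 2 + (k : ℝ) / 2)) (L * N ^ n / √q) :=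
    (by positivity : (0 : ℝ) ≤ L * N ^ ((n : ℝ) / 2 + (k : ℝ) / 2)).trans (le_max_left _ _)
  rcases le_or_gt (2 * m) (n + k) with hsmall | hlarge
  · calc _ ≤ (L : ℝ) * N ^ ((n : ℝ) / 2 + (k : ℝ) / 2) :=
          sum_norm_sum_piFinset_e_le_rpow hN1 (fun p hp => ⟨(hP' p hp).1.pos, (hP' p hp).2.2⟩)
            hsmall _
      _ ≤ max ((L : ℝ) * N ^ ((n : ℝ) / 2 + (k : ℝ) / 2)) (L * N ^ n / √q) := le_max_left _ _
      _ ≤ _ := by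
          have h1 : (1 : ℝ) ≤ (n : ℝ) ^ n := one_le_pow₀ (by exact_mod_cast hn)
          have h2 : (1 : ℝ) ≤ 2 ^ (n + k) := one_le_pow₀ one_le_two
          exact le_mul_of_one_le_left hM (by nlinarith)
  · have hq : 0 < q := by omega
    refine le_of_pow_le_pow_left₀ two_ne_zero (by positivity) ?_
    exact (sq_sum_norm_sum_e_prodPow_le a q n k L m N P r hq (by exact_mod_cast ha) hLN hqLN hN
      hP' hmn hr hrn hlarge).trans (two_pow_mul_add_le_sq hn hN1 hq)
end

section
/- Let n, k, L be positive integers and N ≥ 1 a real number with L ≤ N^n and 2^{n+k+1} < N, and let 𝒫 be a set of prime numbers contained in the interval [N/2, N]. Then for every positive integer r with r ≤ L·N^k, the number of tuples (l, q₁, …, q_k) with 1 ≤ l ≤ L an integer, q₁, …, q_k ∈ 𝒫, and l·q₁⋯q_k = r, is at most 2^{n+k+1}·k^k. -/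
/-!
Every `qᵢ` is a prime of `𝒫` dividing `r`, and `l` is determined by `r` and the `qᵢ`, so there are at
most `s ^ k` tuples, where `s` is the number of primes of `𝒫` dividing `r`. Their product divides `r`,
so `(N / 2) ^ s ≤ r ≤ N ^ (n + k)`, which forces `s ≤ n + k` because `2 ^ (n + k + 1) < N`. Finally
`(n + k) ^ k ≤ 2 ^ (n + k) * k ^ k`.
-/

open Finset

lemma card_filter_mul_prod_eq_le {ι : Type*} [Fintype ι] [DecidableEq ι] (A P : Finset ℕ)
    (hP : 0 ∉ P) (r : ℕ) :
    ((A ×ˢ Fintype.piFinset fun _ : ι => P).filter (fun x => x.1 * ∏ i, x.2 i = r)).card ≤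
      (P.filter (· ∣ r)).card ^ Fintype.card ι := by
  have hmaps : ∀ x ∈ (A ×ˢ Fintype.piFinset fun _ : ι => P).filter (fun x => x.1 * ∏ i, x.2 i = r),
      x.2 ∈ Fintype.piFinset fun _ : ι => P.filter (· ∣ r) := by
    intro x hx
    simp only [mem_filter, mem_product, Fintype.mem_piFinset] at hx ⊢
    exact fun i => ⟨hx.1.2 i, hx.2 ▸ (dvd_prod_of_mem _ (mem_univ i)).mul_left _⟩
  have hinj : Set.InjOn Prod.snd
      ((A ×ˢ Fintype.piFinset fun _ : ι => P).filter (fun x => x.1 * ∏ i, x.2 i = r) :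
        Set (ℕ × (ι → ℕ))) := by
    intro x hx y hy hxy
    simp only [coe_filter, mem_product, Fintype.mem_piFinset, Set.mem_ofPred_eq] at hx hy
    have hprod : ∏ i, x.2 i ≠ 0 := prod_ne_zero_iff.2 fun i _ h => hP (h ▸ hx.1.2 i)
    refine Prod.ext (Nat.eq_of_mul_eq_mul_right (Nat.pos_of_ne_zero hprod) ?_) hxy
    rw [hx.2, hxy, hy.2]
  calc _ ≤ (Fintype.piFinset fun _ : ι => P.filter (· ∣ r)).card := card_le_card_of_injOn _ hmaps hinj
    _ = _ := by simp [Fintype.card_piFinset]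

lemma pow_card_le_of_forall_prime_dvd {S : Finset ℕ} {r : ℕ} (hr : 0 < r) {M : ℝ} (hM : 0 ≤ M)
    (hS : ∀ p ∈ S, p.Prime ∧ M ≤ p ∧ p ∣ r) : M ^ S.card ≤ r := by
  have hdvd : ∏ p ∈ S, p ∣ r :=
    prod_primes_dvd r (fun p hp => (hS p hp).1.prime) (fun p hp => (hS p hp).2.2)
  calc M ^ S.card = ∏ _p ∈ S, M := (prod_const M).symm
    _ ≤ ∏ p ∈ S, (p : ℝ) := prod_le_prod (fun _ _ => hM) (fun p hp => (hS p hp).2.1)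
    _ ≤ r := by rw [← Nat.cast_prod]; exact_mod_cast Nat.le_of_dvd hr hdvd

lemma le_of_half_pow_le_pow {N : ℝ} {m s : ℕ} (hN : 2 ^ (m + 1) < N)
    (h : (N / 2) ^ s ≤ N ^ m) : s ≤ m := by
  by_contra! hms
  have hN2 : 1 ≤ N / 2 := by
    have : (2 : ℝ) ≤ 2 ^ (m + 1) := le_self_pow₀ one_le_two (by omega)
    linarith
  have hN0 : 0 < N := by linarith
  have : N ^ (m + 1) < N ^ (m + 1) :=
    calc N ^ (m + 1) = 2 ^ (m + 1) * (N / 2) ^ (m + 1) := by rw [← mul_pow, mul_div_cancel₀ N two_ne_zero]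
      _ ≤ 2 ^ (m + 1) * N ^ m := by gcongr; exact (pow_le_pow_right₀ hN2 hms).trans h
      _ < N * N ^ m := by gcongr
      _ = N ^ (m + 1) := (pow_succ' N m).symm
  exact this.false

lemma add_pow_le_two_pow_mul_pow (a k : ℕ) : (a + k) ^ k ≤ 2 ^ (a + k) * k ^ k := by
  rcases Nat.eq_zero_or_pos k with rfl | hk
  · simp [Nat.one_le_two_pow]
  -- `c = ⌈a / k⌉`, so that `a + k ≤ (c + 1) * k` and `c * k < a + k`
  set c := (a + k - 1) / k
  have hdiv : k * c + (a + k - 1) % k = a + k - 1 := Nat.div_add_mod _ k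
  have hmod : (a + k - 1) % k < k := Nat.mod_lt _ hk
  have hck : c * k = k * c := mul_comm c k
  calc (a + k) ^ k ≤ ((c + 1) * k) ^ k := Nat.pow_le_pow_left (by rw [add_mul, hck]; omega) k
    _ = (c + 1) ^ k * k ^ k := mul_pow _ _ _
    _ ≤ (2 ^ c) ^ k * k ^ k := by gcongr; exact Nat.lt_two_pow_self
    _ = 2 ^ (c * k) * k ^ k := by rw [← pow_mul]
    _ ≤ 2 ^ (a + k) * k ^ k := Nat.mul_le_mul_right _ (Nat.pow_le_pow_right two_pos (by omega))

theorem stmt_10_general (n k L : ℕ)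
    (N : ℝ) (hLN : (L : ℝ) ≤ N ^ (n : ℕ))
    (h2 : (2 : ℝ) ^ (n + k + 1) < N)
    (P : Finset ℕ) (hP : ∀ p ∈ P, Nat.Prime p ∧ N / 2 ≤ (p : ℝ) ∧ (p : ℝ) ≤ N)
    (r : ℕ) (hr : 0 < r) (hrLN : (r : ℝ) ≤ (L : ℝ) * N ^ (k : ℕ)) :
    (((Finset.Icc 1 L) ×ˢ Fintype.piFinset fun _ : Fin k => P).filter
        (fun x => x.1 * ∏ i, x.2 i = r)).card ≤ 2 ^ (n + k + 1) * k ^ k := by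
  have hN : 0 < N := (by positivity : (0 : ℝ) < 2 ^ (n + k + 1)).trans h2
  have hP0 : 0 ∉ P := fun h => Nat.not_prime_zero (hP 0 h).1
  have hS : (P.filter (· ∣ r)).card ≤ n + k := by
    refine le_of_half_pow_le_pow h2 ?_
    calc (N / 2) ^ (P.filter (· ∣ r)).card ≤ r :=
          pow_card_le_of_forall_prime_dvd hr (by positivity) fun p hp =>
            ⟨(hP p (mem_filter.1 hp).1).1, (hP p (mem_filter.1 hp).1).2.1, (mem_filter.1 hp).2⟩
      _ ≤ L * N ^ k := hrLN
      _ ≤ N ^ n * N ^ k := by gcongr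
      _ = N ^ (n + k) := (pow_add N n k).symm
  calc _ ≤ (P.filter (· ∣ r)).card ^ k := by
        simpa using card_filter_mul_prod_eq_le (ι := Fin k) (Icc 1 L) P hP0 r
    _ ≤ (n + k) ^ k := Nat.pow_le_pow_left hS k
    _ ≤ 2 ^ (n + k) * k ^ k := add_pow_le_two_pow_mul_pow n k
    _ ≤ 2 ^ (n + k + 1) * k ^ k := Nat.mul_le_mul_right _ (Nat.pow_le_pow_right two_pos (by omega))

theorem stmt_10 (n k L : ℕ) (hn : 0 < n) (hk : 0 < k) (hL : 0 < L)
    (N : ℝ) (hN : 1 ≤ N) (hLN : (L : ℝ) ≤ N ^ (n : ℕ))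
    (h2 : (2 : ℝ) ^ (n + k + 1) < N)
    (P : Finset ℕ) (hP : ∀ p ∈ P, Nat.Prime p ∧ N / 2 ≤ (p : ℝ) ∧ (p : ℝ) ≤ N)
    (r : ℕ) (hr : 0 < r) (hrLN : (r : ℝ) ≤ (L : ℝ) * N ^ (k : ℕ)) :
    (((Finset.Icc 1 L) ×ˢ Fintype.piFinset fun _ : Fin k => P).filter
        (fun x => x.1 * ∏ i, x.2 i = r)).card ≤ 2 ^ (n + k + 1) * k ^ k :=
  stmt_10_general n k L N hLN h2 P hP r hr hrLN
end
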